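/- arXiv:1504.03969 — 5 statements merged into one kernel-verified Lean document; each statement's English description precedes it below -/
import Mathlib

section
/- Let u : (M, M_i) → (N, N_i) be a morphism of filtered modules over a filtered ring, where the filtrations on M and N are exhaustive, and for each i ∈ ℤ the groups M_i and N_i are complete and separated with respect to the filtrations (M_{i-n})_{n∈ℕ} and (N_{i-n})_{n∈ℕ} respectively. If the graded map gr(u) : gr(M) → gr(N) is surjective, then for every i ∈ ℤ one has u(M_i) = N_i; in particular u is surjective. -/
/-!
Successive approximation: starting from `x₀ = 0`, surjectivity of `gr(u)` in degree `i - n`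
corrects `xₙ` by an element of `M_{i-n}` so that `u(xₙ₊₁) - y ∈ N_{i-n-1}`. The `xₙ` form a
Cauchy sequence in `Mᵢ`; its limit `z` satisfies `u z - y ∈ N_{i-n}` for every `n`, so
`u z = y` by separatedness of `Nᵢ`.
-/

namespace Filtration

variable {M N : Type*} [AddCommGroup M] [AddCommGroup N]

def IsComplete (F : ℤ → AddSubgroup M) : Prop :=
  ∀ i : ℤ, ∀ y : ℕ → M, (∀ n, y n ∈ F i) → (∀ n : ℕ, y (n + 1) - y n ∈ F (i - n)) →
    ∃ z ∈ F i, ∀ n : ℕ, z - y n ∈ F (i - n)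

def IsSeparated (F : ℤ → AddSubgroup M) : Prop :=
  ∀ i : ℤ, ∀ x ∈ F i, (∀ n : ℕ, x ∈ F (i - n)) → x = 0

lemma mem_of_zero_of_sub_mem {F : ℤ → AddSubgroup M} (hF : Monotone F) {i : ℤ} {x : ℕ → M}
    (h0 : x 0 = 0) (hsub : ∀ n : ℕ, x (n + 1) - x n ∈ F (i - n)) (n : ℕ) : x n ∈ F i := by
  induction n with
  | zero => simp [h0]
  | succ n ih =>
    rw [← sub_add_cancel (x (n + 1)) (x n)]
    exact add_mem (hF (by omega) (hsub n)) ih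

variable {FM : ℤ → AddSubgroup M} {FN : ℤ → AddSubgroup N} (f : M →+ N)

lemma exists_seq_approx (hgr : ∀ i : ℤ, ∀ y ∈ FN i, ∃ x ∈ FM i, f x - y ∈ FN (i - 1))
    (i : ℤ) (y : N) (hy : y ∈ FN i) :
    ∃ x : ℕ → M, x 0 = 0 ∧ (∀ n : ℕ, x (n + 1) - x n ∈ FM (i - n)) ∧
      ∀ n : ℕ, f (x n) - y ∈ FN (i - n) := by
  choose! c hcM hcN using hgr
  let x : ℕ → M := fun n ↦ Nat.rec 0 (fun n xn ↦ xn - c (i - n) (f xn - y)) n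
  have hx_succ (n : ℕ) : x (n + 1) = x n - c (i - n) (f (x n) - y) := rfl
  have happrox (n : ℕ) : f (x n) - y ∈ FN (i - n) := by
    induction n with
    | zero => simpa [x] using hy
    | succ n ih =>
      have hdeg : i - ((n + 1 : ℕ) : ℤ) = i - n - 1 := by push_cast; ring
      rw [hx_succ, map_sub, sub_right_comm, hdeg, ← neg_mem_iff, neg_sub]
      exact hcN _ _ ih
  refine ⟨x, rfl, fun n ↦ ?_, happrox⟩
  rw [hx_succ, sub_sub_cancel_left, neg_mem_iff]
  exact hcM _ _ (happrox n)

theorem exists_map_eq_of_gr_surjective (hFM : Monotone FM)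
    (hMcomp : IsComplete FM) (hNsep : IsSeparated FN)
    (hf : ∀ i : ℤ, ∀ x ∈ FM i, f x ∈ FN i)
    (hgr : ∀ i : ℤ, ∀ y ∈ FN i, ∃ x ∈ FM i, f x - y ∈ FN (i - 1))
    (i : ℤ) (y : N) (hy : y ∈ FN i) : ∃ x ∈ FM i, f x = y := by
  obtain ⟨x, hx0, hsub, happrox⟩ := exists_seq_approx f hgr i y hy
  obtain ⟨z, hzM, hlim⟩ := hMcomp i x (mem_of_zero_of_sub_mem hFM hx0 hsub) hsub
  have hclose (n : ℕ) : f z - y ∈ FN (i - n) := by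
    rw [← sub_add_sub_cancel _ (f (x n)), ← map_sub]
    exact add_mem (hf _ _ (hlim n)) (happrox n)
  exact ⟨z, hzM, sub_eq_zero.mp (hNsep i _ (by simpa using hclose 0) hclose)⟩

end Filtration

theorem stmt_1_general {D M N : Type*} [Ring D] [AddCommGroup M] [AddCommGroup N]
    [Module D M] [Module D N]
    (FM : ℤ → AddSubgroup M) (hFMmono : Monotone FM)
    (FN : ℤ → AddSubgroup N)
    -- exhaustiveness
    (hNexh : ∀ y : N, ∃ i, y ∈ FN i)
    -- each `Mᵢ` is complete and separated with respect to `(M_{i-n})_{n ∈ ℕ}`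
    (hMcomp : ∀ i : ℤ, ∀ y : ℕ → M, (∀ n, y n ∈ FM i) →
      (∀ n : ℕ, y (n + 1) - y n ∈ FM (i - (n : ℤ))) →
      ∃ z ∈ FM i, ∀ n : ℕ, z - y n ∈ FM (i - (n : ℤ)))
    -- each `Nᵢ` is complete and separated with respect to `(N_{i-n})_{n ∈ ℕ}`
    (hNsep : ∀ i : ℤ, ∀ y ∈ FN i, (∀ n : ℕ, y ∈ FN (i - (n : ℤ))) → y = 0)
    -- `u` is a filtered morphism
    (u : M →ₗ[D] N) (hu : ∀ i : ℤ, ∀ x ∈ FM i, u x ∈ FN i)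
    -- `gr(u)` is surjective
    (hgrsurj : ∀ i : ℤ, ∀ y ∈ FN i, ∃ x ∈ FM i, u x - y ∈ FN (i - 1)) :
    (∀ i : ℤ, ∀ y ∈ FN i, ∃ x ∈ FM i, u x = y) ∧ Function.Surjective u := by
  have hlift := Filtration.exists_map_eq_of_gr_surjective u.toAddMonoidHom hFMmono hMcomp
    hNsep hu hgrsurj
  refine ⟨hlift, fun y ↦ ?_⟩
  obtain ⟨i, hi⟩ := hNexh y
  obtain ⟨x, -, hx⟩ := hlift i y hi
  exact ⟨x, hx⟩

/-- If `u : (M, Mᵢ) → (N, Nᵢ)` is a morphism of filtered modules with exhaustive filtrations,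
each `Mᵢ`, `Nᵢ` complete and separated for the filtrations `(M_{i-n})ₙ`, `(N_{i-n})ₙ`, and
`gr(u)` surjective, then `u(Mᵢ) = Nᵢ` for all `i`; in particular `u` is surjective. -/
theorem stmt_1 {D M N : Type*} [Ring D] [AddCommGroup M] [AddCommGroup N]
    [Module D M] [Module D N]
    (FD : ℤ → AddSubgroup D) (hFDmono : Monotone FD)
    (hFDone : (1 : D) ∈ FD 0)
    (hFDmul : ∀ i j : ℤ, ∀ a ∈ FD i, ∀ b ∈ FD j, a * b ∈ FD (i + j))
    (FM : ℤ → AddSubgroup M) (hFMmono : Monotone FM)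
    (hFMsmul : ∀ i j : ℤ, ∀ a ∈ FD i, ∀ x ∈ FM j, a • x ∈ FM (i + j))
    (FN : ℤ → AddSubgroup N) (hFNmono : Monotone FN)
    (hFNsmul : ∀ i j : ℤ, ∀ a ∈ FD i, ∀ y ∈ FN j, a • y ∈ FN (i + j))
    -- exhaustiveness
    (hMexh : ∀ x : M, ∃ i, x ∈ FM i) (hNexh : ∀ y : N, ∃ i, y ∈ FN i)
    -- each `Mᵢ` is complete and separated with respect to `(M_{i-n})_{n ∈ ℕ}`
    (hMcomp : ∀ i : ℤ, ∀ y : ℕ → M, (∀ n, y n ∈ FM i) →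
      (∀ n : ℕ, y (n + 1) - y n ∈ FM (i - (n : ℤ))) →
      ∃ z ∈ FM i, ∀ n : ℕ, z - y n ∈ FM (i - (n : ℤ)))
    (hMsep : ∀ i : ℤ, ∀ x ∈ FM i, (∀ n : ℕ, x ∈ FM (i - (n : ℤ))) → x = 0)
    -- each `Nᵢ` is complete and separated with respect to `(N_{i-n})_{n ∈ ℕ}`
    (hNcomp : ∀ i : ℤ, ∀ y : ℕ → N, (∀ n, y n ∈ FN i) →
      (∀ n : ℕ, y (n + 1) - y n ∈ FN (i - (n : ℤ))) →
      ∃ z ∈ FN i, ∀ n : ℕ, z - y n ∈ FN (i - (n : ℤ)))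
    (hNsep : ∀ i : ℤ, ∀ y ∈ FN i, (∀ n : ℕ, y ∈ FN (i - (n : ℤ))) → y = 0)
    -- `u` is a filtered morphism
    (u : M →ₗ[D] N) (hu : ∀ i : ℤ, ∀ x ∈ FM i, u x ∈ FN i)
    -- `gr(u)` is surjective
    (hgrsurj : ∀ i : ℤ, ∀ y ∈ FN i, ∃ x ∈ FM i, u x - y ∈ FN (i - 1)) :
    (∀ i : ℤ, ∀ y ∈ FN i, ∃ x ∈ FM i, u x = y) ∧ Function.Surjective u :=
  stmt_1_general FM hFMmono FN hNexh hMcomp hNsep u hu hgrsurj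
end

section
/- Let u : (M, M_i) → (N, N_i) be a morphism of filtered modules such that the filtrations are exhaustive and separated (resp. complete as needed), with gr(u) : gr(M) → gr(N) injective. Then for every i ∈ ℤ, M ∩ u^{-1}(N_i) = M_i, i.e. u(M_i) = u(M) ∩ N_i (u is a strict monomorphism). -/
/-!
Injectivity of `gr(u)` says that an element of `Mᵢ` whose image lies in `Nᵢ₋₁` already lies in
`Mᵢ₋₁`. Starting from any level `Mⱼ` containing `x` (the filtration is exhaustive), this lowers the
filtration degree of `x` one step at a time down to any `i` with `u x ∈ Nᵢ`. Injectivity of `u`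
then follows from separatedness, since `u x = 0` lies in every `Nᵢ`.
-/

namespace Filtration

variable {M N : Type*} {FM : ℤ → Set M} {FN : ℤ → Set N} {f : M → N}

theorem mem_of_mem_of_map_mem_of_le (hFN : Monotone FN)
    (hgr : ∀ i : ℤ, ∀ x ∈ FM i, f x ∈ FN (i - 1) → x ∈ FM (i - 1))
    {i j : ℤ} (hij : i ≤ j) : ∀ x ∈ FM j, f x ∈ FN i → x ∈ FM i := by
  induction j, hij using Int.leInduction with
  | base => exact fun x hx _ => hx
  | succ j _ ih =>
    intro x hx hfx
    have hx' : x ∈ FM (j + 1 - 1) := hgr (j + 1) x hx (hFN (by omega) hfx)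
    exact ih x (by simpa using hx') hfx

theorem mem_of_map_mem (hFM : Monotone FM) (hFMexh : ∀ x : M, ∃ i, x ∈ FM i) (hFN : Monotone FN)
    (hgr : ∀ i : ℤ, ∀ x ∈ FM i, f x ∈ FN (i - 1) → x ∈ FM (i - 1))
    {i : ℤ} {x : M} (hfx : f x ∈ FN i) : x ∈ FM i := by
  obtain ⟨j, hj⟩ := hFMexh x
  rcases le_total j i with hji | hij
  · exact hFM hji hj
  · exact mem_of_mem_of_map_mem_of_le hFN hgr hij x hj hfx

end Filtration

theorem stmt_2_general {D M N : Type*} [Ring D] [AddCommGroup M] [AddCommGroup N]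
    [Module D M] [Module D N]
    (FM : ℤ → AddSubgroup M) (hFMmono : Monotone FM)
    (FN : ℤ → AddSubgroup N) (hFNmono : Monotone FN)
    -- exhaustive and separated filtrations
    (hMexh : ∀ x : M, ∃ i, x ∈ FM i) (hMsep : ∀ x : M, (∀ i, x ∈ FM i) → x = 0)
    -- `u` is a filtered morphism
    (u : M →ₗ[D] N) (hu : ∀ i : ℤ, ∀ x ∈ FM i, u x ∈ FN i)
    -- `gr(u)` is injective
    (hgrinj : ∀ i : ℤ, ∀ x ∈ FM i, u x ∈ FN (i - 1) → x ∈ FM (i - 1)) :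
    Function.Injective u ∧ ∀ (i : ℤ) (x : M), u x ∈ FN i ↔ x ∈ FM i := by
  have hstrict : ∀ (i : ℤ) (x : M), u x ∈ FN i → x ∈ FM i := fun i x =>
    Filtration.mem_of_map_mem (FM := fun i => (FM i : Set M)) (FN := fun i => (FN i : Set N))
      (fun _ _ h => hFMmono h) hMexh (fun _ _ h => hFNmono h) hgrinj
  refine ⟨(injective_iff_map_eq_zero u).2 fun x hx => ?_, fun i x => ⟨hstrict i x, hu i x⟩⟩
  exact hMsep x fun i => hstrict i x (hx ▸ (FN i).zero_mem)

/-- If `u : (M, Mᵢ) → (N, Nᵢ)` is a morphism of filtered modules with exhaustive and separated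
filtrations, and `gr(u)` is injective, then `u` is a strict monomorphism:
`M ∩ u⁻¹(Nᵢ) = Mᵢ`, i.e. `u(Mᵢ) = u(M) ∩ Nᵢ`, for every `i`. -/
theorem stmt_2 {D M N : Type*} [Ring D] [AddCommGroup M] [AddCommGroup N]
    [Module D M] [Module D N]
    (FD : ℤ → AddSubgroup D) (hFDmono : Monotone FD)
    (hFDone : (1 : D) ∈ FD 0)
    (hFDmul : ∀ i j : ℤ, ∀ a ∈ FD i, ∀ b ∈ FD j, a * b ∈ FD (i + j))
    (FM : ℤ → AddSubgroup M) (hFMmono : Monotone FM)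
    (hFMsmul : ∀ i j : ℤ, ∀ a ∈ FD i, ∀ x ∈ FM j, a • x ∈ FM (i + j))
    (FN : ℤ → AddSubgroup N) (hFNmono : Monotone FN)
    (hFNsmul : ∀ i j : ℤ, ∀ a ∈ FD i, ∀ y ∈ FN j, a • y ∈ FN (i + j))
    -- exhaustive and separated filtrations
    (hMexh : ∀ x : M, ∃ i, x ∈ FM i) (hMsep : ∀ x : M, (∀ i, x ∈ FM i) → x = 0)
    (hNexh : ∀ y : N, ∃ i, y ∈ FN i) (hNsep : ∀ y : N, (∀ i, y ∈ FN i) → y = 0)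
    -- `u` is a filtered morphism
    (u : M →ₗ[D] N) (hu : ∀ i : ℤ, ∀ x ∈ FM i, u x ∈ FN i)
    -- `gr(u)` is injective
    (hgrinj : ∀ i : ℤ, ∀ x ∈ FM i, u x ∈ FN (i - 1) → x ∈ FM (i - 1)) :
    Function.Injective u ∧ ∀ (i : ℤ) (x : M), u x ∈ FN i ↔ x ∈ FM i :=
  stmt_2_general FM hFMmono FN hFNmono hMexh hMsep u hu hgrinj
end

section
/- Let 0 → (M', M'_i) → (M, M_i) → (M'', M''_i) → 0 be a sequence of morphisms of filtered modules over a filtered ring, where each M_i, M'_i, M''_i is complete and separated for the induced filtration and the filtrations are exhaustive. If g ∘ f = 0 and the sequence of graded modules 0 → gr(M') → gr(M) → gr(M'') → 0 is exact, then for every i ∈ ℤ the sequence of abelian groups 0 → M'_i → M_i → M''_i → 0 is exact; in particular 0 → M' → M → M'' → 0 is exact. -/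
/-!
Exactness on each filtration step is obtained by successive approximation. Graded
surjectivity corrects an approximate preimage of `b` whose error lies in `F (i - n)` by an
element of `F (i - n)`, leaving an error in `F (i - n - 1)`; the corrections form a Cauchy
sequence in the complete source, and its limit is an exact preimage because the target is
separated. Dually, graded injectivity pushes an element of the kernel into every `F (i - n)`,
so it vanishes by separatedness. Exhaustiveness then passes from the steps to the modules.
-/

theorem exists_seq_of_exists_succ {α : Type*} (P : ℕ → α → Prop) (Q : ℕ → α → α → Prop)
    {a₀ : α} (h₀ : P 0 a₀) (hsucc : ∀ n a, P n a → ∃ b, P (n + 1) b ∧ Q n a b) :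
    ∃ u : ℕ → α, (∀ n, P n (u n)) ∧ ∀ n, Q n (u n) (u (n + 1)) := by
  choose next hP hQ using hsucc
  let u : ∀ n : ℕ, {a : α // P n a} :=
    fun n => Nat.rec ⟨a₀, h₀⟩ (fun n a => ⟨next n a.1 a.2, hP n a.1 a.2⟩) n
  exact ⟨fun n => (u n).1, fun n => (u n).2, fun n => hQ n (u n).1 (u n).2⟩

section Filtration

variable {A B : Type*} [AddCommGroup A] [AddCommGroup B]

def FiltrationComplete (F : ℤ → AddSubgroup A) : Prop :=
  ∀ i : ℤ, ∀ y : ℕ → A, (∀ n, y n ∈ F i) → (∀ n : ℕ, y (n + 1) - y n ∈ F (i - (n : ℤ))) →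
    ∃ z ∈ F i, ∀ n : ℕ, z - y n ∈ F (i - (n : ℤ))

def FiltrationSeparated (F : ℤ → AddSubgroup A) : Prop :=
  ∀ i : ℤ, ∀ x ∈ F i, (∀ n : ℕ, x ∈ F (i - (n : ℤ))) → x = 0

variable {F : Type*} [FunLike F A B] (φ : F)
  {FA : ℤ → AddSubgroup A} {FB : ℤ → AddSubgroup B}

theorem mem_sub_of_map_mem_sub (hFB : Monotone FB)
    (hgr : ∀ i, ∀ a ∈ FA i, φ a ∈ FB (i - 1) → a ∈ FA (i - 1)) (n : ℕ) {i : ℤ} {a : A}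
    (ha : a ∈ FA i) (hφa : φ a ∈ FB (i - n)) : a ∈ FA (i - n) := by
  induction n with
  | zero => simpa using ha
  | succ n ih =>
    rw [Nat.cast_succ, ← sub_sub] at hφa ⊢
    exact hgr _ _ (ih (hFB (by omega) hφa)) hφa

theorem eq_zero_of_map_eq_zero (hFB : Monotone FB) (hsep : FiltrationSeparated FA)
    (hgr : ∀ i, ∀ a ∈ FA i, φ a ∈ FB (i - 1) → a ∈ FA (i - 1)) {i : ℤ} {a : A}
    (ha : a ∈ FA i) (hφa : φ a = 0) : a = 0 :=
  hsep i a ha fun n => mem_sub_of_map_mem_sub φ hFB hgr n ha (hφa ▸ zero_mem _)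

theorem exists_mem_map_eq [AddMonoidHomClass F A B] (S : AddSubgroup B) (hFA : Monotone FA)
    (hcomp : FiltrationComplete FA) (hsep : FiltrationSeparated FB)
    (hφ : ∀ i, ∀ a ∈ FA i, φ a ∈ FB i) (hS : ∀ a, φ a ∈ S)
    (hgr : ∀ i, ∀ b ∈ FB i, b ∈ S → ∃ a ∈ FA i, φ a - b ∈ FB (i - 1))
    {i : ℤ} {b : B} (hb : b ∈ FB i) (hbS : b ∈ S) : ∃ a ∈ FA i, φ a = b := by
  obtain ⟨y, hy, hy_succ⟩ := exists_seq_of_exists_succ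
    (fun n a => a ∈ FA i ∧ φ a - b ∈ FB (i - n)) (fun n a a' => a' - a ∈ FA (i - n))
    (a₀ := 0) ⟨zero_mem _, by simpa using neg_mem hb⟩ fun n a ⟨ha, herr⟩ => by
      obtain ⟨c, hc, hcerr⟩ := hgr (i - n) (b - φ a) (sub_mem_comm_iff.mp herr)
        (sub_mem hbS (hS a))
      refine ⟨a + c, ⟨add_mem ha (hFA (by omega) hc), ?_⟩, by simpa using hc⟩
      rw [Nat.cast_succ, ← sub_sub, map_add]
      convert hcerr using 1
      abel
  obtain ⟨z, hz, hzy⟩ := hcomp i y (fun n => (hy n).1) hy_succ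
  have herr (n : ℕ) : φ z - b ∈ FB (i - n) := by
    rw [show φ z - b = φ (z - y n) + (φ (y n) - b) by rw [map_sub]; abel]
    exact add_mem (hφ _ _ (hzy n)) (hy n).2
  exact ⟨z, hz, sub_eq_zero.mp (hsep i _ (sub_mem (hφ i z hz) hb) herr)⟩

end Filtration

theorem stmt_3_general {D M' M M'' : Type*} [Ring D]
    [AddCommGroup M'] [AddCommGroup M] [AddCommGroup M'']
    [Module D M'] [Module D M] [Module D M'']
    (FM' : ℤ → AddSubgroup M') (hFM'mono : Monotone FM')
    (FM : ℤ → AddSubgroup M) (hFMmono : Monotone FM)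
    (FM'' : ℤ → AddSubgroup M'')
    -- exhaustiveness
    (hM'exh : ∀ x : M', ∃ i, x ∈ FM' i) (hMexh : ∀ x : M, ∃ i, x ∈ FM i)
    (hM''exh : ∀ x : M'', ∃ i, x ∈ FM'' i)
    -- completeness and separatedness of each filtration step
    (hM'comp : ∀ i : ℤ, ∀ y : ℕ → M', (∀ n, y n ∈ FM' i) →
      (∀ n : ℕ, y (n + 1) - y n ∈ FM' (i - (n : ℤ))) →
      ∃ z ∈ FM' i, ∀ n : ℕ, z - y n ∈ FM' (i - (n : ℤ)))
    (hM'sep : ∀ i : ℤ, ∀ x ∈ FM' i, (∀ n : ℕ, x ∈ FM' (i - (n : ℤ))) → x = 0)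
    (hMcomp : ∀ i : ℤ, ∀ y : ℕ → M, (∀ n, y n ∈ FM i) →
      (∀ n : ℕ, y (n + 1) - y n ∈ FM (i - (n : ℤ))) →
      ∃ z ∈ FM i, ∀ n : ℕ, z - y n ∈ FM (i - (n : ℤ)))
    (hMsep : ∀ i : ℤ, ∀ x ∈ FM i, (∀ n : ℕ, x ∈ FM (i - (n : ℤ))) → x = 0)
    (hM''sep : ∀ i : ℤ, ∀ x ∈ FM'' i, (∀ n : ℕ, x ∈ FM'' (i - (n : ℤ))) → x = 0)
    -- filtered morphisms
    (f : M' →ₗ[D] M) (hf : ∀ i : ℤ, ∀ x ∈ FM' i, f x ∈ FM i)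
    (g : M →ₗ[D] M'') (hg : ∀ i : ℤ, ∀ x ∈ FM i, g x ∈ FM'' i)
    -- `g ∘ f = 0`
    (hgf : ∀ x : M', g (f x) = 0)
    -- exactness of `0 → gr M' → gr M → gr M'' → 0`
    (hgrinj : ∀ i : ℤ, ∀ x ∈ FM' i, f x ∈ FM (i - 1) → x ∈ FM' (i - 1))
    (hgrexact : ∀ i : ℤ, ∀ x ∈ FM i, g x ∈ FM'' (i - 1) →
      ∃ x' ∈ FM' i, x - f x' ∈ FM (i - 1))
    (hgrsurj : ∀ i : ℤ, ∀ z ∈ FM'' i, ∃ x ∈ FM i, g x - z ∈ FM'' (i - 1)) :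
    (∀ i : ℤ,
      (∀ x ∈ FM' i, f x = 0 → x = 0) ∧
      (∀ x ∈ FM i, g x = 0 → ∃ x' ∈ FM' i, f x' = x) ∧
      (∀ z ∈ FM'' i, ∃ x ∈ FM i, g x = z)) ∧
    Function.Injective f ∧ (∀ x : M, g x = 0 → ∃ x' : M', f x' = x) ∧
    Function.Surjective g := by
  have hinj (i : ℤ) : ∀ x ∈ FM' i, f x = 0 → x = 0 := fun _ hx =>
    eq_zero_of_map_eq_zero f hFMmono hM'sep hgrinj hx
  have hker (i : ℤ) : ∀ x ∈ FM i, g x = 0 → ∃ x' ∈ FM' i, f x' = x := fun _ hx hgx =>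
    exists_mem_map_eq f (LinearMap.ker g).toAddSubgroup hFM'mono hM'comp hMsep hf hgf
      (fun i x hx hgx => by
        obtain ⟨x', hx', herr⟩ := hgrexact i x hx
          (LinearMap.mem_ker.mp hgx ▸ zero_mem _)
        exact ⟨x', hx', sub_mem_comm_iff.mp herr⟩) hx hgx
  have hsurj (i : ℤ) : ∀ z ∈ FM'' i, ∃ x ∈ FM i, g x = z := fun _ hz =>
    exists_mem_map_eq g ⊤ hFMmono hMcomp hM''sep hg (fun _ => trivial)
      (fun i z hz _ => hgrsurj i z hz) hz trivial
  refine ⟨fun i => ⟨hinj i, hker i, hsurj i⟩, ?_, fun x hgx => ?_, fun z => ?_⟩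
  · refine (injective_iff_map_eq_zero f).mpr fun x hfx => ?_
    obtain ⟨i, hi⟩ := hM'exh x
    exact hinj i x hi hfx
  · obtain ⟨i, hi⟩ := hMexh x
    obtain ⟨x', -, hx'⟩ := hker i x hi hgx
    exact ⟨x', hx'⟩
  · obtain ⟨i, hi⟩ := hM''exh z
    obtain ⟨x, -, hx⟩ := hsurj i z hi
    exact ⟨x, hx⟩

/-- Let `0 → (M', M'ᵢ) → (M, Mᵢ) → (M'', M''ᵢ) → 0` be a sequence of morphisms of filtered
modules over a filtered ring, with each filtration step complete and separated and the
filtrations exhaustive.  If `g ∘ f = 0` and `0 → gr M' → gr M → gr M'' → 0` is exact, then for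
every `i` the sequence `0 → M'ᵢ → Mᵢ → M''ᵢ → 0` is exact; in particular
`0 → M' → M → M'' → 0` is exact. -/
theorem stmt_3 {D M' M M'' : Type*} [Ring D]
    [AddCommGroup M'] [AddCommGroup M] [AddCommGroup M'']
    [Module D M'] [Module D M] [Module D M'']
    (FD : ℤ → AddSubgroup D) (hFDmono : Monotone FD)
    (hFDone : (1 : D) ∈ FD 0)
    (hFDmul : ∀ i j : ℤ, ∀ a ∈ FD i, ∀ b ∈ FD j, a * b ∈ FD (i + j))
    (FM' : ℤ → AddSubgroup M') (hFM'mono : Monotone FM')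
    (hFM'smul : ∀ i j : ℤ, ∀ a ∈ FD i, ∀ x ∈ FM' j, a • x ∈ FM' (i + j))
    (FM : ℤ → AddSubgroup M) (hFMmono : Monotone FM)
    (hFMsmul : ∀ i j : ℤ, ∀ a ∈ FD i, ∀ x ∈ FM j, a • x ∈ FM (i + j))
    (FM'' : ℤ → AddSubgroup M'') (hFM''mono : Monotone FM'')
    (hFM''smul : ∀ i j : ℤ, ∀ a ∈ FD i, ∀ x ∈ FM'' j, a • x ∈ FM'' (i + j))
    -- exhaustiveness
    (hM'exh : ∀ x : M', ∃ i, x ∈ FM' i) (hMexh : ∀ x : M, ∃ i, x ∈ FM i)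
    (hM''exh : ∀ x : M'', ∃ i, x ∈ FM'' i)
    -- completeness and separatedness of each filtration step
    (hM'comp : ∀ i : ℤ, ∀ y : ℕ → M', (∀ n, y n ∈ FM' i) →
      (∀ n : ℕ, y (n + 1) - y n ∈ FM' (i - (n : ℤ))) →
      ∃ z ∈ FM' i, ∀ n : ℕ, z - y n ∈ FM' (i - (n : ℤ)))
    (hM'sep : ∀ i : ℤ, ∀ x ∈ FM' i, (∀ n : ℕ, x ∈ FM' (i - (n : ℤ))) → x = 0)
    (hMcomp : ∀ i : ℤ, ∀ y : ℕ → M, (∀ n, y n ∈ FM i) →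
      (∀ n : ℕ, y (n + 1) - y n ∈ FM (i - (n : ℤ))) →
      ∃ z ∈ FM i, ∀ n : ℕ, z - y n ∈ FM (i - (n : ℤ)))
    (hMsep : ∀ i : ℤ, ∀ x ∈ FM i, (∀ n : ℕ, x ∈ FM (i - (n : ℤ))) → x = 0)
    (hM''comp : ∀ i : ℤ, ∀ y : ℕ → M'', (∀ n, y n ∈ FM'' i) →
      (∀ n : ℕ, y (n + 1) - y n ∈ FM'' (i - (n : ℤ))) →
      ∃ z ∈ FM'' i, ∀ n : ℕ, z - y n ∈ FM'' (i - (n : ℤ)))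
    (hM''sep : ∀ i : ℤ, ∀ x ∈ FM'' i, (∀ n : ℕ, x ∈ FM'' (i - (n : ℤ))) → x = 0)
    -- filtered morphisms
    (f : M' →ₗ[D] M) (hf : ∀ i : ℤ, ∀ x ∈ FM' i, f x ∈ FM i)
    (g : M →ₗ[D] M'') (hg : ∀ i : ℤ, ∀ x ∈ FM i, g x ∈ FM'' i)
    -- `g ∘ f = 0`
    (hgf : ∀ x : M', g (f x) = 0)
    -- exactness of `0 → gr M' → gr M → gr M'' → 0`
    (hgrinj : ∀ i : ℤ, ∀ x ∈ FM' i, f x ∈ FM (i - 1) → x ∈ FM' (i - 1))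
    (hgrexact : ∀ i : ℤ, ∀ x ∈ FM i, g x ∈ FM'' (i - 1) →
      ∃ x' ∈ FM' i, x - f x' ∈ FM (i - 1))
    (hgrsurj : ∀ i : ℤ, ∀ z ∈ FM'' i, ∃ x ∈ FM i, g x - z ∈ FM'' (i - 1)) :
    (∀ i : ℤ,
      (∀ x ∈ FM' i, f x = 0 → x = 0) ∧
      (∀ x ∈ FM i, g x = 0 → ∃ x' ∈ FM' i, f x' = x) ∧
      (∀ z ∈ FM'' i, ∃ x ∈ FM i, g x = z)) ∧
    Function.Injective f ∧ (∀ x : M, g x = 0 → ∃ x' : M', f x' = x) ∧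
    Function.Surjective g :=
  stmt_3_general FM' hFM'mono FM hFMmono FM'' hM'exh hMexh hM''exh hM'comp hM'sep hMcomp hMsep
    hM''sep f hf g hg hgf hgrinj hgrexact hgrsurj
end

section
/- Let (D, D_i) be a filtered ring and (N, N_i) a filtered (D, D_i)-module. If (L, L_i) is a finite direct sum of twists (D(n_k), D(n_k)_i) (a filt free module of finite type), then the canonical morphism gr^F Hom_D(L, N) → Hom_{gr D}(gr L, gr N) is an isomorphism of abelian groups. -/
/-!
Evaluation at the standard basis vectors identifies `Hom_D(⊕ₖ D(n k), N)` with `N^s`, and since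
`Pi.single k 1` lies in filtration degree `-n k` and generates, this identification carries
`Fᵢ Hom_D(L, N)` exactly onto `∏ₖ F_{i - n k} N`. Passing to the quotients by the `(i - 1)`-st
steps gives the isomorphism in each degree.
-/

/-- The `i`-th filtration step of a filt free filtered `(D, Dᵢ)`-module of finite type,
a finite direct sum of twists `D(n k)` (where `D(n)ᵢ = D_{i+n}`). -/
def freeFilt {D : Type*} [Ring D] (FD : ℤ → AddSubgroup D) {s : ℕ} (n : Fin s → ℤ)
    (i : ℤ) : AddSubgroup (Fin s → D) where
  carrier := {x | ∀ k, x k ∈ FD (i + n k)}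
  zero_mem' := fun _ => (FD _).zero_mem
  add_mem' := fun hx hy k => (FD _).add_mem (hx k) (hy k)
  neg_mem' := fun hx k => (FD _).neg_mem (hx k)

/-- The `i`-th step `Fᵢ Hom_D(L, N)` of the canonical filtration on `Hom_D(L, N)`. -/
def homFilt {D L N : Type*} [Ring D] [AddCommGroup L] [Module D L]
    [AddCommGroup N] [Module D N]
    (FL : ℤ → AddSubgroup L) (FN : ℤ → AddSubgroup N) (i : ℤ) :
    AddSubgroup (L →ₗ[D] N) where
  carrier := {φ | ∀ j : ℤ, ∀ x ∈ FL j, φ x ∈ FN (i + j)}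
  zero_mem' := fun _ _ _ => (FN _).zero_mem
  add_mem' := fun hφ hψ j x hx => (FN _).add_mem (hφ j x hx) (hψ j x hx)
  neg_mem' := fun hφ j x hx => (FN _).neg_mem (hφ j x hx)

section QuotientPi

variable {A ι : Type*} {M : ι → Type*} [AddCommGroup A] [∀ k, AddCommGroup (M k)]
  (f : A →+ ∀ k, M k) {H H' : AddSubgroup A} {P P' : ∀ k, AddSubgroup (M k)}

def componentwiseMk (hH : ∀ x, x ∈ H ↔ ∀ k, f x k ∈ P k) :
    H →+ ∀ k, P k ⧸ (P' k).addSubgroupOf (P k) where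
  toFun x k := QuotientAddGroup.mk ⟨f x k, (hH x).1 x.2 k⟩
  map_zero' := funext fun k => by
    rw [Pi.zero_apply, ← QuotientAddGroup.mk_zero]
    exact congrArg _ (Subtype.ext (by simp))
  map_add' x y := funext fun k => by
    rw [Pi.add_apply, ← QuotientAddGroup.mk_add]
    exact congrArg _ (Subtype.ext (by simp))

theorem ker_componentwiseMk (hH : ∀ x, x ∈ H ↔ ∀ k, f x k ∈ P k)
    (hH' : ∀ x, x ∈ H' ↔ ∀ k, f x k ∈ P' k) :
    (componentwiseMk (P' := P') f hH).ker = H'.addSubgroupOf H := by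
  ext x
  simp [componentwiseMk, funext_iff, QuotientAddGroup.eq_zero_iff, AddSubgroup.mem_addSubgroupOf,
    hH']

theorem componentwiseMk_surjective (hf : Function.Surjective f)
    (hH : ∀ x, x ∈ H ↔ ∀ k, f x k ∈ P k) :
    Function.Surjective (componentwiseMk (P' := P') f hH) := by
  intro y
  choose z hz using fun k => QuotientAddGroup.mk_surjective (y k)
  obtain ⟨x, hx⟩ := hf fun k => z k
  refine ⟨⟨x, (hH x).2 fun k => hx ▸ (z k).2⟩, funext fun k => ?_⟩
  simp [componentwiseMk, hx, ← hz]

theorem exists_quotient_addEquiv_pi (hf : Function.Surjective f)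
    (hH : ∀ x, x ∈ H ↔ ∀ k, f x k ∈ P k) (hH' : ∀ x, x ∈ H' ↔ ∀ k, f x k ∈ P' k) :
    ∃ e : H ⧸ H'.addSubgroupOf H ≃+ ∀ k, P k ⧸ (P' k).addSubgroupOf (P k),
      ∀ x : H, e x = fun k => QuotientAddGroup.mk ⟨f x k, (hH x).1 x.2 k⟩ :=
  ⟨(QuotientAddGroup.quotientAddEquivOfEq (ker_componentwiseMk f hH hH').symm).trans
    (QuotientAddGroup.quotientKerEquivOfSurjective _ (componentwiseMk_surjective f hf hH)),
    fun _ => rfl⟩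

end QuotientPi

section FiltFree

variable {D N : Type*} [Ring D] [AddCommGroup N] [Module D N] {FD : ℤ → AddSubgroup D}
  {FN : ℤ → AddSubgroup N} {s : ℕ} (n : Fin s → ℤ)

theorem single_one_mem_freeFilt (hFDone : (1 : D) ∈ FD 0) (k : Fin s) :
    (Pi.single k 1 : Fin s → D) ∈ freeFilt FD n (-n k) := by
  intro k'
  rcases eq_or_ne k' k with rfl | h
  · simpa using hFDone
  · simp [Pi.single_eq_of_ne h]

theorem mem_homFilt_freeFilt_iff (hFDone : (1 : D) ∈ FD 0)
    (hFNsmul : ∀ i j : ℤ, ∀ a ∈ FD i, ∀ y ∈ FN j, a • y ∈ FN (i + j))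
    (i : ℤ) (φ : (Fin s → D) →ₗ[D] N) :
    φ ∈ homFilt (freeFilt FD n) FN i ↔ ∀ k, φ (Pi.single k 1) ∈ FN (i - n k) := by
  refine ⟨fun hφ k => by simpa [sub_eq_add_neg] using hφ _ _ (single_one_mem_freeFilt n hFDone k),
    fun hφ j x hx => ?_⟩
  rw [← (LinearEquiv.piRing D N (Fin s) ℕ).symm_apply_apply φ, LinearEquiv.piRing_symm_apply]
  refine AddSubgroup.sum_mem _ fun k _ => ?_
  exact (by ring : j + n k + (i - n k) = i + j) ▸ hFNsmul _ _ _ (hx k) _ (hφ k)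

end FiltFree

/-- For a filt free filtered `(D, Dᵢ)`-module `L = ⊕ₖ D(n k)` of finite type, the canonical
morphism `gr^F Hom_D(L, N) → Hom_{gr D}(gr L, gr N)` is an isomorphism of abelian groups:
in each degree `i` it is the isomorphism `grᵢ^F Hom_D(L, N) ≃ ∏ₖ gr_{i - n k} N` given by
evaluation at the standard basis vectors. -/
theorem stmt_11 {D N : Type*} [Ring D] [AddCommGroup N] [Module D N]
    (FD : ℤ → AddSubgroup D)
    (hFDone : (1 : D) ∈ FD 0)
    (FN : ℤ → AddSubgroup N)
    (hFNsmul : ∀ i j : ℤ, ∀ a ∈ FD i, ∀ y ∈ FN j, a • y ∈ FN (i + j))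
    (s : ℕ) (n : Fin s → ℤ) :
    ∀ i : ℤ,
      ∃ e : (↥(homFilt (D := D) (freeFilt FD n) FN i) ⧸
          (homFilt (D := D) (freeFilt FD n) FN (i - 1)).addSubgroupOf
            (homFilt (D := D) (freeFilt FD n) FN i)) ≃+
        (∀ k : Fin s, ↥(FN (i - n k)) ⧸ (FN (i - n k - 1)).addSubgroupOf (FN (i - n k))),
      ∀ φ : homFilt (D := D) (freeFilt FD n) FN i,
        e (QuotientAddGroup.mk φ) = fun k =>
          QuotientAddGroup.mk
            ⟨(φ : (Fin s → D) →ₗ[D] N) (Pi.single k 1), by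
              have hsingle : (Pi.single k 1 : Fin s → D) ∈ freeFilt FD n (-(n k)) := by
                intro k'
                rcases eq_or_ne k' k with h | h
                · subst h
                  simpa [Pi.single_eq_same] using hFDone
                · simpa [Pi.single_eq_of_ne h] using (FD _).zero_mem
              simpa [sub_eq_add_neg] using φ.2 (-(n k)) _ hsingle⟩ := by
  intro i
  have hmem := mem_homFilt_freeFilt_iff n hFDone hFNsmul
  exact exists_quotient_addEquiv_pi (LinearEquiv.piRing D N (Fin s) ℕ).toAddEquiv.toAddMonoidHom
    (LinearEquiv.piRing D N (Fin s) ℕ).surjective (hmem i)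
    fun φ => by rw [hmem (i - 1) φ]; simp only [sub_right_comm]; rfl
end

section
/- Let u : (M, M_i) → (N, N_i) be a morphism of filtered modules. Then u is strict (u(M_i) = u(M) ∩ N_i for all i) if and only if ker(gr u) = gr(ker u) and coker(gr u) = gr(coker u), where ker u carries the filtration ker u ∩ M_i, and coker u carries the filtration image of N_i. -/
/-!
Strictness gives both graded conditions directly. Conversely, if `u x ∈ N_i` with `x ∈ M_j`,
`j > i`, then the symbol of `x` in degree `j` lies in `ker (gr u) = gr (ker u)`, so `x` can be
corrected by an element of `ker u` to drop into `M_{j-1}` without changing `u x`; since the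
filtration of `M` is exhaustive, descending one step at a time reaches `M_i`.
-/

namespace FilteredMap

variable {M N F : Type*} [AddCommGroup M] [AddCommGroup N] [FunLike F M N]
  {FM : ℤ → AddSubgroup M} {FN : ℤ → AddSubgroup N} {u : F}

/-- `u (M_i) = u M ∩ N_i` for all `i`. -/
def IsStrict (FM : ℤ → AddSubgroup M) (FN : ℤ → AddSubgroup N) (u : F) : Prop :=
  ∀ (i : ℤ) (x : M), u x ∈ FN i → ∃ x' ∈ FM i, u x' = u x

/-- `ker (gr u) ⊆ gr (ker u)`: a symbol of degree `i` killed by `gr u` is the symbol of an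
element of `ker u ∩ M_i`. -/
def KerGrLeGrKer (FM : ℤ → AddSubgroup M) (FN : ℤ → AddSubgroup N) (u : F) : Prop :=
  ∀ i : ℤ, ∀ x ∈ FM i, u x ∈ FN (i - 1) →
    ∃ x' : M, x' ∈ FM i ∧ u x' = 0 ∧ x - x' ∈ FM (i - 1)

theorem IsStrict.kerGrLeGrKer [AddMonoidHomClass F M N] (hFM : Monotone FM)
    (hs : IsStrict FM FN u) : KerGrLeGrKer FM FN u := by
  intro i x hx hux
  obtain ⟨x'', hx'', hux''⟩ := hs (i - 1) x hux
  refine ⟨x - x'', sub_mem hx (hFM (by omega) hx''), by rw [map_sub, hux'', sub_self], ?_⟩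
  rwa [sub_sub_cancel]

theorem IsStrict.exists_sub_mem (hFN : Monotone FN) (hs : IsStrict FM FN u)
    {i : ℤ} {y : N} (hy : y ∈ FN i) {m : M} (hm : y - u m ∈ FN (i - 1)) :
    ∃ x ∈ FM i, y - u x ∈ FN (i - 1) := by
  have hum : u m ∈ FN i := by
    rw [← sub_sub_cancel y (u m)]
    exact sub_mem hy (hFN (by omega) hm)
  obtain ⟨x, hx, hux⟩ := hs i m hum
  exact ⟨x, hx, hux ▸ hm⟩

theorem KerGrLeGrKer.exists_preimage_mem_of_le [AddMonoidHomClass F M N]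
    (hker : KerGrLeGrKer FM FN u) (hFN : Monotone FN) {i j : ℤ} (hij : i ≤ j) :
    ∀ x ∈ FM j, u x ∈ FN i → ∃ x' ∈ FM i, u x' = u x := by
  induction j, hij using Int.leInduction with
  | base => exact fun x hx _ ↦ ⟨x, hx, rfl⟩
  | succ j hij ih =>
    intro x hx hux
    obtain ⟨x', -, hux', hxx'⟩ := hker (j + 1) x hx (by simpa using hFN hij hux)
    rw [add_sub_cancel_right] at hxx'
    have hu_sub : u (x - x') = u x := by rw [map_sub, hux', sub_zero]
    obtain ⟨x'', hx'', hux''⟩ := ih (x - x') hxx' (hu_sub ▸ hux)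
    exact ⟨x'', hx'', hux''.trans hu_sub⟩

theorem KerGrLeGrKer.isStrict [AddMonoidHomClass F M N] (hker : KerGrLeGrKer FM FN u)
    (hFM : Monotone FM) (hFN : Monotone FN) (hexh : ∀ x : M, ∃ i, x ∈ FM i) :
    IsStrict FM FN u := by
  intro i x hux
  obtain ⟨j, hj⟩ := hexh x
  rcases le_total j i with hji | hij
  · exact ⟨x, hFM hji hj, rfl⟩
  · exact hker.exists_preimage_mem_of_le hFN hij x hj hux

end FilteredMap

open FilteredMap in
theorem stmt_15_general {D M N : Type*} [Ring D] [AddCommGroup M] [AddCommGroup N]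
    [Module D M] [Module D N]
    (FM : ℤ → AddSubgroup M) (hFMmono : Monotone FM)
    (FN : ℤ → AddSubgroup N) (hFNmono : Monotone FN)
    -- exhaustiveness
    (hMexh : ∀ x : M, ∃ i, x ∈ FM i)
    (u : M →ₗ[D] N) :
    -- `u` is strict
    ((∀ (i : ℤ) (x : M), u x ∈ FN i → ∃ x' ∈ FM i, u x' = u x) ↔
      -- `ker(gr u) = gr(ker u)` …
      ((∀ i : ℤ, ∀ x ∈ FM i, u x ∈ FN (i - 1) →
          ∃ x' : M, x' ∈ FM i ∧ u x' = 0 ∧ x - x' ∈ FM (i - 1)) ∧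
        -- … and `coker(gr u) = gr(coker u)`
        (∀ i : ℤ, ∀ y ∈ FN i, (∃ m : M, y - u m ∈ FN (i - 1)) →
          ∃ x ∈ FM i, y - u x ∈ FN (i - 1)))) := by
  refine ⟨fun hs ↦ ⟨IsStrict.kerGrLeGrKer hFMmono hs, ?_⟩,
    fun ⟨hker, _⟩ ↦ KerGrLeGrKer.isStrict hker hFMmono hFNmono hMexh⟩
  · exact fun i y hy ⟨m, hm⟩ ↦ IsStrict.exists_sub_mem (FM := FM) hFNmono hs hy hm

/-- In Laumon's setting (complete filtered ring, good filtered modules: filtrations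
exhaustive with each step complete and separated), a filtered morphism `u` is strict iff
`ker(gr u) = gr(ker u)` and `coker(gr u) = gr(coker u)`. -/
theorem stmt_15 {D M N : Type*} [Ring D] [AddCommGroup M] [AddCommGroup N]
    [Module D M] [Module D N]
    (FD : ℤ → AddSubgroup D) (hFDmono : Monotone FD)
    (hFDone : (1 : D) ∈ FD 0)
    (hFDmul : ∀ i j : ℤ, ∀ a ∈ FD i, ∀ b ∈ FD j, a * b ∈ FD (i + j))
    (hFDexh : ∀ a : D, ∃ i, a ∈ FD i)
    (hFDcomp : ∀ i : ℤ, ∀ y : ℕ → D, (∀ n, y n ∈ FD i) →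
      (∀ n : ℕ, y (n + 1) - y n ∈ FD (i - (n : ℤ))) →
      ∃ z ∈ FD i, ∀ n : ℕ, z - y n ∈ FD (i - (n : ℤ)))
    (hFDsep : ∀ i : ℤ, ∀ a ∈ FD i, (∀ n : ℕ, a ∈ FD (i - (n : ℤ))) → a = 0)
    (FM : ℤ → AddSubgroup M) (hFMmono : Monotone FM)
    (hFMsmul : ∀ i j : ℤ, ∀ a ∈ FD i, ∀ x ∈ FM j, a • x ∈ FM (i + j))
    (FN : ℤ → AddSubgroup N) (hFNmono : Monotone FN)
    (hFNsmul : ∀ i j : ℤ, ∀ a ∈ FD i, ∀ y ∈ FN j, a • y ∈ FN (i + j))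
    -- exhaustiveness
    (hMexh : ∀ x : M, ∃ i, x ∈ FM i) (hNexh : ∀ y : N, ∃ i, y ∈ FN i)
    -- completeness and separatedness of each filtration step
    (hMcomp : ∀ i : ℤ, ∀ y : ℕ → M, (∀ n, y n ∈ FM i) →
      (∀ n : ℕ, y (n + 1) - y n ∈ FM (i - (n : ℤ))) →
      ∃ z ∈ FM i, ∀ n : ℕ, z - y n ∈ FM (i - (n : ℤ)))
    (hMsep : ∀ i : ℤ, ∀ x ∈ FM i, (∀ n : ℕ, x ∈ FM (i - (n : ℤ))) → x = 0)
    (hNcomp : ∀ i : ℤ, ∀ y : ℕ → N, (∀ n, y n ∈ FN i) →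
      (∀ n : ℕ, y (n + 1) - y n ∈ FN (i - (n : ℤ))) →
      ∃ z ∈ FN i, ∀ n : ℕ, z - y n ∈ FN (i - (n : ℤ)))
    (hNsep : ∀ i : ℤ, ∀ y ∈ FN i, (∀ n : ℕ, y ∈ FN (i - (n : ℤ))) → y = 0)
    -- `u` is a filtered morphism
    (u : M →ₗ[D] N) (hu : ∀ i : ℤ, ∀ x ∈ FM i, u x ∈ FN i) :
    -- `u` is strict
    ((∀ (i : ℤ) (x : M), u x ∈ FN i → ∃ x' ∈ FM i, u x' = u x) ↔
      -- `ker(gr u) = gr(ker u)` …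
      ((∀ i : ℤ, ∀ x ∈ FM i, u x ∈ FN (i - 1) →
          ∃ x' : M, x' ∈ FM i ∧ u x' = 0 ∧ x - x' ∈ FM (i - 1)) ∧
        -- … and `coker(gr u) = gr(coker u)`
        (∀ i : ℤ, ∀ y ∈ FN i, (∃ m : M, y - u m ∈ FN (i - 1)) →
          ∃ x ∈ FM i, y - u x ∈ FN (i - 1)))) :=
  stmt_15_general FM hFMmono FN hFNmono hMexh u
end
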